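/- arXiv:1506.02474 — 5 statements merged into one kernel-verified Lean document; each statement's English description precedes it below -/
import Mathlib

section
/- Let L and L' be real normed spaces and let Q : L → L' be a continuous map. Then the following two conditions are equivalent: (a) Q satisfies Q(u+v) + Q(u-v) = 2Q(u) + 2Q(v) for all u, v ∈ L and Q(k•u) = k²•Q(u) for all u ∈ L and all k ∈ ℝ; (b) there exists a continuous symmetric bilinear map B : L × L → L' such that Q(u) = B(u,u) for all u ∈ L. -/
/-! The bilinear map is the polarization `B u v = (Q (u + v) - Q (u - v)) / 4`. The parallelogram
law alone forces `Q 0 = 0` and `Q (-u) = Q u`, hence `B` is symmetric with `B u u = Q u`, and it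
gives the identity `B (u + v) w + B (u - v) w = 2 • B u w`; evaluated at the half-sum and
half-difference of two vectors, this makes `B` additive. A continuous additive map between real
vector spaces is `ℝ`-linear, which supplies homogeneity. Conversely, the diagonal of any bilinear
map satisfies the parallelogram law and is homogeneous of degree two. -/

section Bilinear

variable {R M N : Type*} [CommRing R] [AddCommGroup M] [Module R M] [AddCommGroup N] [Module R N]

theorem LinearMap.diag_add_add_diag_sub (B : M →ₗ[R] M →ₗ[R] N) (u v : M) :
    B (u + v) (u + v) + B (u - v) (u - v) = (2 : R) • B u u + (2 : R) • B v v := by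
  simp only [map_add, map_sub, LinearMap.add_apply, LinearMap.sub_apply, two_smul]
  abel

theorem LinearMap.diag_smul (B : M →ₗ[R] M →ₗ[R] N) (k : R) (u : M) :
    B (k • u) (k • u) = k ^ 2 • B u u := by
  rw [map_smul, map_smul, LinearMap.smul_apply, smul_smul, sq]

end Bilinear

section Polarization

variable {E F : Type*} [AddCommGroup E] [AddCommGroup F] [Module ℝ F]

def ParallelogramLaw (Q : E → F) : Prop :=
  ∀ u v, Q (u + v) + Q (u - v) = (2 : ℝ) • Q u + (2 : ℝ) • Q v

noncomputable def polarization (Q : E → F) (u v : E) : F :=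
  (4 : ℝ)⁻¹ • (Q (u + v) - Q (u - v))

namespace ParallelogramLaw

variable {Q : E → F}

theorem map_zero (hQ : ParallelogramLaw Q) : Q 0 = 0 := by
  have h := hQ 0 0
  rw [add_zero, sub_zero, two_smul, left_eq_add, ← two_smul ℝ, smul_eq_zero] at h
  exact h.resolve_left two_ne_zero

theorem map_neg (hQ : ParallelogramLaw Q) (u : E) : Q (-u) = Q u := by
  have h := hQ 0 u
  rw [zero_add, zero_sub, hQ.map_zero, smul_zero, zero_add, two_smul] at h
  exact add_left_cancel (h.trans (add_comm _ _))

theorem polarization_comm (hQ : ParallelogramLaw Q) (u v : E) :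
    polarization Q u v = polarization Q v u := by
  rw [polarization, polarization, add_comm, ← neg_sub v u, hQ.map_neg]

theorem polarization_zero_left (hQ : ParallelogramLaw Q) (v : E) : polarization Q 0 v = 0 := by
  rw [polarization, zero_add, zero_sub, hQ.map_neg, sub_self, smul_zero]

theorem polarization_self (hQ : ParallelogramLaw Q) (u : E) : polarization Q u u = Q u := by
  have h := hQ u u
  rw [sub_self, hQ.map_zero, add_zero] at h
  rw [polarization, sub_self, hQ.map_zero, sub_zero, h, ← add_smul, smul_smul]
  norm_num

theorem polarization_add_add_sub_left (hQ : ParallelogramLaw Q) (u v w : E) :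
    polarization Q (u + v) w + polarization Q (u - v) w = (2 : ℝ) • polarization Q u w := by
  rw [polarization, polarization, polarization, ← smul_add, smul_comm]
  congr 1
  rw [show u + v + w = u + w + v by abel, show u - v + w = u + w - v by abel,
    show u + v - w = u - w + v by abel, show u - v - w = u - w - v by abel]
  calc _ = (Q (u + w + v) + Q (u + w - v)) - (Q (u - w + v) + Q (u - w - v)) := by abel
    _ = ((2 : ℝ) • Q (u + w) + (2 : ℝ) • Q v) - ((2 : ℝ) • Q (u - w) + (2 : ℝ) • Q v) := by
      rw [hQ (u + w) v, hQ (u - w) v]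
    _ = _ := by rw [smul_sub]; abel

variable [Module ℝ E]

theorem polarization_two_smul_left (hQ : ParallelogramLaw Q) (u w : E) :
    polarization Q ((2 : ℝ) • u) w = (2 : ℝ) • polarization Q u w := by
  rw [← hQ.polarization_add_add_sub_left u u w, sub_self, hQ.polarization_zero_left, add_zero,
    two_smul]

theorem polarization_add_left (hQ : ParallelogramLaw Q) (u v w : E) :
    polarization Q (u + v) w = polarization Q u w + polarization Q v w := by
  have h := hQ.polarization_add_add_sub_left ((2 : ℝ)⁻¹ • (u + v)) ((2 : ℝ)⁻¹ • (u - v)) w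
  rw [← smul_add, ← smul_sub, add_add_sub_cancel, add_sub_sub_cancel, ← two_smul ℝ, ← two_smul ℝ,
    inv_smul_smul₀ two_ne_zero, inv_smul_smul₀ two_ne_zero] at h
  rw [h, ← hQ.polarization_two_smul_left, smul_inv_smul₀ two_ne_zero]

theorem polarization_add_right (hQ : ParallelogramLaw Q) (u v w : E) :
    polarization Q u (v + w) = polarization Q u v + polarization Q u w := by
  rw [hQ.polarization_comm, hQ.polarization_add_left, hQ.polarization_comm v,
    hQ.polarization_comm w]

end ParallelogramLaw

end Polarization

theorem Continuous.polarization {E F : Type*} [TopologicalSpace E] [AddCommGroup E]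
    [IsTopologicalAddGroup E] [TopologicalSpace F] [AddCommGroup F] [Module ℝ F]
    [IsTopologicalAddGroup F] [ContinuousConstSMul ℝ F] {Q : E → F} (hQ : Continuous Q) :
    Continuous fun p : E × E => polarization Q p.1 p.2 := by
  unfold _root_.polarization
  fun_prop

section Topological

variable {E F : Type*} [AddCommGroup E] [Module ℝ E] [TopologicalSpace E] [IsTopologicalAddGroup E]
  [ContinuousSMul ℝ E] [AddCommGroup F] [Module ℝ F] [TopologicalSpace F] [IsTopologicalAddGroup F]
  [ContinuousSMul ℝ F] [T2Space F] {Q : E → F}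

theorem ParallelogramLaw.polarization_smul_left (hQ : ParallelogramLaw Q) (hc : Continuous Q)
    (k : ℝ) (u v : E) : polarization Q (k • u) v = k • polarization Q u v :=
  map_real_smul (AddMonoidHom.mk' (polarization Q · v) (hQ.polarization_add_left · · v))
    (hc.polarization.comp (continuous_id.prodMk continuous_const)) k u

theorem ParallelogramLaw.polarization_smul_right (hQ : ParallelogramLaw Q) (hc : Continuous Q)
    (k : ℝ) (u v : E) : polarization Q u (k • v) = k • polarization Q u v := by
  rw [hQ.polarization_comm, hQ.polarization_smul_left hc, hQ.polarization_comm]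

end Topological

/-- For a continuous map `Q` between real normed spaces, the
parallelogram-type identity together with real quadratic homogeneity is
equivalent to `Q` being the diagonal of a continuous symmetric bilinear map. -/
theorem quadratic_iff_diagonal_of_bilinear
    {L L' : Type*} [NormedAddCommGroup L] [NormedSpace ℝ L]
    [NormedAddCommGroup L'] [NormedSpace ℝ L']
    (Q : L → L') (hQcont : Continuous Q) :
    ((∀ u v : L, Q (u + v) + Q (u - v) = (2 : ℝ) • Q u + (2 : ℝ) • Q v) ∧
      (∀ (k : ℝ) (u : L), Q (k • u) = k ^ 2 • Q u)) ↔
    (∃ B : L → L → L',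
      Continuous (fun p : L × L => B p.1 p.2) ∧
      (∀ u v : L, B u v = B v u) ∧
      (∀ u v w : L, B (u + v) w = B u w + B v w) ∧
      (∀ (k : ℝ) (u v : L), B (k • u) v = k • B u v) ∧
      (∀ u v w : L, B u (v + w) = B u v + B u w) ∧
      (∀ (k : ℝ) (u v : L), B u (k • v) = k • B u v) ∧
      (∀ u : L, Q u = B u u)) := by
  constructor
  · rintro ⟨hpar : ParallelogramLaw Q, -⟩
    exact ⟨polarization Q, hQcont.polarization, hpar.polarization_comm,
      hpar.polarization_add_left, hpar.polarization_smul_left hQcont, hpar.polarization_add_right,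
      hpar.polarization_smul_right hQcont, fun u => (hpar.polarization_self u).symm⟩
  · rintro ⟨B, -, -, hadd_left, hsmul_left, hadd_right, hsmul_right, hdiag⟩
    obtain rfl : Q = fun u => B u u := funext hdiag
    let B' : L →ₗ[ℝ] L →ₗ[ℝ] L' := LinearMap.mk₂ ℝ B hadd_left hsmul_left hadd_right hsmul_right
    exact ⟨B'.diag_add_add_diag_sub, B'.diag_smul⟩
end

section
/- Let L and L' be real normed spaces, let B : L × L → L' be a continuous symmetric bilinear map, and let Q : L → L' be given by Q(u) = B(u,u). Then the following conditions are equivalent: (i) for all u, v ∈ L, Q(u) = Q(v) implies v = u or v = -u; (ii) B is nondegenerate in the sense that for every u ∈ L with u ≠ 0, the equality B(u,v) = 0 implies v = 0. -/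
/-!
Symmetry of `B` gives `Q u - Q v = B (u - v) (u + v)` and, when `B u v = 0`,
`Q (u + v) = Q (u - v)`. So if `B` is nondegenerate, `Q u = Q v` forces `u - v = 0` or
`u + v = 0`; conversely, if `Q` determines `u` up to sign and `B u v = 0` with `u ≠ 0`,
then `u - v = ±(u + v)` and absence of `2`-torsion leaves only `v = 0`.
-/

namespace AddMonoidHom

variable {M N : Type*} [AddCommGroup M] [AddCommGroup N]

theorem apply_sub_add_eq_sub (f : M →+ M →+ N) (hf : ∀ u v, f u v = f v u) (u v : M) :
    f (u - v) (u + v) = f u u - f v v := by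
  simp only [map_sub, map_add, sub_apply, hf v u]
  abel

theorem apply_add_add_eq_apply_sub_sub (f : M →+ M →+ N) (hf : ∀ u v, f u v = f v u)
    {u v : M} (huv : f u v = 0) : f (u + v) (u + v) = f (u - v) (u - v) := by
  simp only [map_sub, map_add, sub_apply, add_apply, hf v u, huv]
  abel

theorem eq_or_eq_neg_of_apply_self_eq (f : M →+ M →+ N) (hf : ∀ u v, f u v = f v u)
    (hf₀ : ∀ u : M, u ≠ 0 → ∀ v, f u v = 0 → v = 0) {u v : M} (h : f u u = f v v) :
    v = u ∨ v = -u := by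
  have hzero : f (u - v) (u + v) = 0 := by rw [apply_sub_add_eq_sub f hf, h, sub_self]
  by_cases huv : u - v = 0
  · exact .inl (sub_eq_zero.mp huv).symm
  · exact .inr (eq_neg_of_add_eq_zero_right (hf₀ _ huv _ hzero))

variable [IsAddTorsionFree M]

theorem eq_zero_of_apply_eq_zero (f : M →+ M →+ N) (hf : ∀ u v, f u v = f v u)
    (hdiag : ∀ u v : M, f u u = f v v → v = u ∨ v = -u) {u v : M} (hu : u ≠ 0)
    (huv : f u v = 0) : v = 0 := by
  rcases hdiag _ _ (apply_add_add_eq_apply_sub_sub f hf huv) with h | h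
  · exact self_eq_neg.mp (add_left_cancel (a := u) (by rw [← sub_eq_add_neg, h]))
  · refine absurd (self_eq_neg.mp (add_right_cancel (b := -v) ?_)) hu
    rw [← sub_eq_add_neg, h, neg_add]

theorem apply_self_eq_iff_nondegenerate (f : M →+ M →+ N) (hf : ∀ u v, f u v = f v u) :
    (∀ u v : M, f u u = f v v → v = u ∨ v = -u) ↔
      ∀ u : M, u ≠ 0 → ∀ v, f u v = 0 → v = 0 :=
  ⟨fun hdiag _ hu _ huv => eq_zero_of_apply_eq_zero f hf hdiag hu huv,
    fun hf₀ _ _ h => eq_or_eq_neg_of_apply_self_eq f hf hf₀ h⟩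

end AddMonoidHom

theorem atMostTwoSolutions_iff_nondegenerate_general
    {L L' : Type*} [NormedAddCommGroup L] [NormedSpace ℝ L]
    [NormedAddCommGroup L']
    (B : L → L → L')
    (hBsymm : ∀ u v : L, B u v = B v u)
    (hBaddl : ∀ u v w : L, B (u + v) w = B u w + B v w)
    (hBaddr : ∀ u v w : L, B u (v + w) = B u v + B u w)
    (Q : L → L') (hQ : ∀ u : L, Q u = B u u) :
    (∀ u v : L, Q u = Q v → v = u ∨ v = -u) ↔
    (∀ u : L, u ≠ 0 → ∀ v : L, B u v = 0 → v = 0) := by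
  have : IsAddTorsionFree L := .of_isTorsionFree ℝ L
  let f : L →+ L →+ L' :=
    .mk' (fun u => .mk' (B u) (hBaddr u)) fun u v => AddMonoidHom.ext (hBaddl u v)
  simp only [hQ]
  exact f.apply_self_eq_iff_nondegenerate hBsymm

/-- Theorem 2: For the quadratic operator `Q(u) = B(u,u)` of a
continuous symmetric bilinear map `B`, the equation `Q(u) = g` has at most two
solutions (i.e. `Q(u) = Q(v)` implies `v = ±u`) iff `B` is nondegenerate. -/
theorem atMostTwoSolutions_iff_nondegenerate
    {L L' : Type*} [NormedAddCommGroup L] [NormedSpace ℝ L]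
    [NormedAddCommGroup L'] [NormedSpace ℝ L']
    (B : L → L → L')
    (hBcont : Continuous (fun p : L × L => B p.1 p.2))
    (hBsymm : ∀ u v : L, B u v = B v u)
    (hBaddl : ∀ u v w : L, B (u + v) w = B u w + B v w)
    (hBsmull : ∀ (k : ℝ) (u v : L), B (k • u) v = k • B u v)
    (hBaddr : ∀ u v w : L, B u (v + w) = B u v + B u w)
    (hBsmulr : ∀ (k : ℝ) (u v : L), B u (k • v) = k • B u v)
    (Q : L → L') (hQ : ∀ u : L, Q u = B u u) :
    (∀ u v : L, Q u = Q v → v = u ∨ v = -u) ↔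
    (∀ u : L, u ≠ 0 → ∀ v : L, B u v = 0 → v = 0) :=
  atMostTwoSolutions_iff_nondegenerate_general B hBsymm hBaddl hBaddr Q hQ
end

section
/- Let L and L' be real normed spaces, let B : L × L → L' be a continuous symmetric bilinear map, and let Q : L → L' be given by Q(u) = B(u,u). If for all u, v ∈ L the equality Q(u) = Q(v) implies v = u or v = -u, then B is nondegenerate: for every u ∈ L with u ≠ 0 and every v ∈ L, B(u,v) = 0 implies v = 0. -/
/-!
If `B u v = 0` then `B (u + v) (u + v) = B (u - v) (u - v)`, since both equal `B u u + B v v`.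
By hypothesis this forces `u - v = u + v` or `u - v = -(u + v)`, that is `2 • v = 0` or
`2 • u = 0`; as `u ≠ 0` and a real vector space is torsion free, `v = 0`.
-/

section TorsionFree

variable {G : Type*} [AddCommGroup G] [IsAddTorsionFree G] {u v : G}

theorem eq_zero_of_sub_eq_add (h : u - v = u + v) : v = 0 := by
  rw [← two_nsmul_eq_zero, two_nsmul]
  rwa [sub_eq_add_neg, add_right_inj, neg_eq_iff_add_eq_zero] at h

theorem eq_zero_of_sub_eq_neg_add (h : u - v = -(u + v)) : u = 0 := by
  rw [← two_nsmul_eq_zero, two_nsmul, ← eq_neg_iff_add_eq_zero.mp h]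
  abel

end TorsionFree

theorem LinearMap.apply_add_add_eq_apply_sub_sub {R M N : Type*} [CommRing R]
    [AddCommGroup M] [Module R M] [AddCommGroup N] [Module R N]
    (B : M →ₗ[R] M →ₗ[R] N) {u v : M} (huv : B u v = 0) (hvu : B v u = 0) :
    B (u + v) (u + v) = B (u - v) (u - v) := by
  simp only [map_add, map_sub, LinearMap.add_apply, LinearMap.sub_apply, huv, hvu]
  abel

theorem nondegenerate_of_atMostTwoSolutions_general
    {L L' : Type*} [NormedAddCommGroup L] [NormedSpace ℝ L]
    [NormedAddCommGroup L'] [NormedSpace ℝ L']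
    (B : L → L → L')
    (hBsymm : ∀ u v : L, B u v = B v u)
    (hBaddl : ∀ u v w : L, B (u + v) w = B u w + B v w)
    (hBsmull : ∀ (k : ℝ) (u v : L), B (k • u) v = k • B u v)
    (hBaddr : ∀ u v w : L, B u (v + w) = B u v + B u w)
    (hBsmulr : ∀ (k : ℝ) (u v : L), B u (k • v) = k • B u v)
    (Q : L → L') (hQ : ∀ u : L, Q u = B u u)
    (h : ∀ u v : L, Q u = Q v → v = u ∨ v = -u) :
    ∀ u : L, u ≠ 0 → ∀ v : L, B u v = 0 → v = 0 := by
  intro u hu v huv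
  have hQuv : Q (u + v) = Q (u - v) := by
    simpa only [hQ, LinearMap.mk₂_apply] using
      (LinearMap.mk₂ ℝ B hBaddl hBsmull hBaddr hBsmulr).apply_add_add_eq_apply_sub_sub
        huv ((hBsymm v u).trans huv)
  have : IsAddTorsionFree L := .of_isTorsionFree ℝ L
  rcases h _ _ hQuv with hsub | hsub
  · exact eq_zero_of_sub_eq_add hsub
  · exact absurd (eq_zero_of_sub_eq_neg_add hsub) hu

/-- If the quadratic operator `Q(u) = B(u,u)` of a continuous
symmetric bilinear map `B` satisfies `Q(u) = Q(v) → v = ±u`, then `B` is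
nondegenerate. -/
theorem nondegenerate_of_atMostTwoSolutions
    {L L' : Type*} [NormedAddCommGroup L] [NormedSpace ℝ L]
    [NormedAddCommGroup L'] [NormedSpace ℝ L']
    (B : L → L → L')
    (hBcont : Continuous (fun p : L × L => B p.1 p.2))
    (hBsymm : ∀ u v : L, B u v = B v u)
    (hBaddl : ∀ u v w : L, B (u + v) w = B u w + B v w)
    (hBsmull : ∀ (k : ℝ) (u v : L), B (k • u) v = k • B u v)
    (hBaddr : ∀ u v w : L, B u (v + w) = B u v + B u w)
    (hBsmulr : ∀ (k : ℝ) (u v : L), B u (k • v) = k • B u v)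
    (Q : L → L') (hQ : ∀ u : L, Q u = B u u)
    (h : ∀ u v : L, Q u = Q v → v = u ∨ v = -u) :
    ∀ u : L, u ≠ 0 → ∀ v : L, B u v = 0 → v = 0 :=
  nondegenerate_of_atMostTwoSolutions_general B hBsymm hBaddl hBsmull hBaddr hBsmulr Q hQ h
end

section
/- Let q ∈ ℝ and let U, V : ℝ → ℝ be twice differentiable functions satisfying U''(x) = (1 + 2q·cos(2x))·U(x) and V''(x) = (1 − 2q·cos(2x))·V(x) for all x ∈ ℝ. Define u, v : ℝ² → ℝ by u(x,y) = U(x)·cos(y) and v(x,y) = V(x)·cos(y). Then u(x,y)·Δv(x,y) + v(x,y)·Δu(x,y) = 0 for all (x,y) ∈ ℝ². Moreover, if in addition U(π/2) = U(−π/2) = V(π/2) = V(−π/2) = 0, then u and v vanish on the boundary of the square D = {(x,y) : −π/2 < x < π/2, −π/2 < y < π/2}. -/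
open Real

/-- The Laplacian `Δw = ∂²w/∂x² + ∂²w/∂y²` of a function `w : ℝ² → ℝ`. -/
noncomputable def laplacian (w : ℝ × ℝ → ℝ) : ℝ × ℝ → ℝ := fun p =>
  deriv (fun x : ℝ => deriv (fun x' : ℝ => w (x', p.2)) x) p.1 +
  deriv (fun y : ℝ => deriv (fun y' : ℝ => w (p.1, y')) y) p.2

/-! For `w(x, y) = W(x) cos y` one has `Δw = (W'' - W) cos y`. The two Mathieu
equations give `U'' - U = 2q cos(2x) U` and `V'' - V = -2q cos(2x) V`, so the two terms of
`u Δv + v Δu` cancel. On the boundary of the square either `x = ±π/2`, where `U` and `V` vanish,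
or `y = ±π/2`, where `cos y` vanishes. -/

-- Scaling by a constant commutes with `deriv` even at points of non-differentiability.
theorem laplacian_mul_cos (W : ℝ → ℝ) (p : ℝ × ℝ) :
    laplacian (fun z => W z.1 * cos z.2) p = (deriv (deriv W) p.1 - W p.1) * cos p.2 := by
  simp only [laplacian, deriv_mul_const_field', deriv_const_mul_field', Real.deriv_cos',
    mul_neg, deriv.fun_neg', Real.deriv_sin]
  ring

theorem mem_frontier_Ioo_prod_Ioo {a b c d : ℝ} {z : ℝ × ℝ}
    (hz : z ∈ frontier (Set.Ioo a b ×ˢ Set.Ioo c d)) :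
    (z.1 = a ∨ z.1 = b) ∨ (z.2 = c ∨ z.2 = d) := by
  rw [(isOpen_Ioo.prod isOpen_Ioo).frontier_eq, closure_prod_eq] at hz
  obtain ⟨⟨hx, hy⟩, hzs⟩ := hz
  have hx' : z.1 ∈ Set.Icc a b := closure_minimal Set.Ioo_subset_Icc_self isClosed_Icc hx
  have hy' : z.2 ∈ Set.Icc c d := closure_minimal Set.Ioo_subset_Icc_self isClosed_Icc hy
  simp only [Set.mem_prod, Set.mem_Ioo, Set.mem_Icc] at hzs hx' hy'
  by_contra! h
  exact hzs ⟨⟨lt_of_le_of_ne hx'.1 (Ne.symm h.1.1), lt_of_le_of_ne hx'.2 h.1.2⟩,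
    ⟨lt_of_le_of_ne hy'.1 (Ne.symm h.2.1), lt_of_le_of_ne hy'.2 h.2.2⟩⟩

theorem mul_cos_eq_zero_of_mem_frontier_square {W : ℝ → ℝ}
    (hW : W (π / 2) = 0) (hW' : W (-(π / 2)) = 0) {z : ℝ × ℝ}
    (hz : z ∈ frontier (Set.Ioo (-(π / 2)) (π / 2) ×ˢ Set.Ioo (-(π / 2)) (π / 2))) :
    W z.1 * cos z.2 = 0 := by
  rcases mem_frontier_Ioo_prod_Ioo hz with (h | h) | (h | h) <;> simp [h, hW, hW']

theorem separated_mathieu_solutions_general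
    (q : ℝ) (U V : ℝ → ℝ)
    (hUeq : ∀ x : ℝ, deriv (deriv U) x = (1 + 2 * q * Real.cos (2 * x)) * U x)
    (hVeq : ∀ x : ℝ, deriv (deriv V) x = (1 - 2 * q * Real.cos (2 * x)) * V x)
    (u v : ℝ × ℝ → ℝ)
    (hu : ∀ x y : ℝ, u (x, y) = U x * Real.cos y)
    (hv : ∀ x y : ℝ, v (x, y) = V x * Real.cos y) :
    (∀ z : ℝ × ℝ, u z * laplacian v z + v z * laplacian u z = 0) ∧
    ((U (π / 2) = 0 ∧ U (-(π / 2)) = 0 ∧ V (π / 2) = 0 ∧ V (-(π / 2)) = 0) →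
      ∀ z ∈ frontier ((Set.Ioo (-(π / 2)) (π / 2)) ×ˢ
          (Set.Ioo (-(π / 2)) (π / 2))), u z = 0 ∧ v z = 0) := by
  obtain rfl : u = fun z => U z.1 * cos z.2 := funext fun z => hu z.1 z.2
  obtain rfl : v = fun z => V z.1 * cos z.2 := funext fun z => hv z.1 z.2
  refine ⟨fun z => ?_, fun ⟨hU, hU', hV, hV'⟩ z hz => ?_⟩
  · simp only [laplacian_mul_cos, hUeq, hVeq]
    ring
  · exact ⟨mul_cos_eq_zero_of_mem_frontier_square hU hU' hz,
      mul_cos_eq_zero_of_mem_frontier_square hV hV' hz⟩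

/-- Separated solutions built from solutions of the two Mathieu
equations satisfy `u·Δv + v·Δu = 0` on `ℝ²`, and vanish on the boundary of the
square `(−π/2, π/2) × (−π/2, π/2)` provided `U, V` vanish at `±π/2`. -/
theorem separated_mathieu_solutions
    (q : ℝ) (U V : ℝ → ℝ)
    (hU : ContDiff ℝ 2 U) (hV : ContDiff ℝ 2 V)
    (hUeq : ∀ x : ℝ, deriv (deriv U) x = (1 + 2 * q * Real.cos (2 * x)) * U x)
    (hVeq : ∀ x : ℝ, deriv (deriv V) x = (1 - 2 * q * Real.cos (2 * x)) * V x)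
    (u v : ℝ × ℝ → ℝ)
    (hu : ∀ x y : ℝ, u (x, y) = U x * Real.cos y)
    (hv : ∀ x y : ℝ, v (x, y) = V x * Real.cos y) :
    (∀ z : ℝ × ℝ, u z * laplacian v z + v z * laplacian u z = 0) ∧
    ((U (π / 2) = 0 ∧ U (-(π / 2)) = 0 ∧ V (π / 2) = 0 ∧ V (-(π / 2)) = 0) →
      ∀ z ∈ frontier ((Set.Ioo (-(π / 2)) (π / 2)) ×ˢ
          (Set.Ioo (-(π / 2)) (π / 2))), u z = 0 ∧ v z = 0) :=
  separated_mathieu_solutions_general q U V hUeq hVeq u v hu hv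
end

section
/- Let D = {(x,y) ∈ ℝ² : −π/2 < x < π/2, −π/2 < y < π/2} be the open square. There exist functions u, v : ℝ² → ℝ, each of class C^∞ on an open set containing the closure of D, vanishing on the boundary ∂D, such that u(x,y)·Δu(x,y) = v(x,y)·Δv(x,y) for all (x,y) ∈ D, and neither u = v on D nor u = −v on D. -/
open Real

private lemma second_deriv_aux (F G : ℝ → ℝ) (hF : ∀ t, HasDerivAt F (G t) t)
    (hG : ∀ t, HasDerivAt G (F t) t) (c b x : ℝ) :
    deriv (fun y : ℝ => deriv (fun x' : ℝ => Real.cos x' * c * F (x' + b)) y) x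
      = -2 * Real.sin x * c * G (x + b) := by
  have hFc : ∀ y : ℝ, HasDerivAt (fun x' : ℝ => F (x' + b)) (G (y + b)) y := by
    intro y
    simpa [Function.comp_def] using (hF (y + b)).comp y ((hasDerivAt_id y).add_const b)
  have hGc : ∀ y : ℝ, HasDerivAt (fun x' : ℝ => G (x' + b)) (F (y + b)) y := by
    intro y
    simpa [Function.comp_def] using (hG (y + b)).comp y ((hasDerivAt_id y).add_const b)
  have h1 : ∀ y : ℝ, deriv (fun x' : ℝ => Real.cos x' * c * F (x' + b)) y
      = -Real.sin y * c * F (y + b) + Real.cos y * c * G (y + b) := by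
    intro y
    exact (((Real.hasDerivAt_cos y).mul_const c).mul (hFc y)).deriv
  have h2 : HasDerivAt
      (fun y : ℝ => -Real.sin y * c * F (y + b) + Real.cos y * c * G (y + b))
      ((-Real.cos x * c * F (x + b) + -Real.sin x * c * G (x + b)) +
        (-Real.sin x * c * G (x + b) + Real.cos x * c * F (x + b))) x := by
    exact ((((Real.hasDerivAt_sin x).neg.mul_const c).mul (hFc x)).add
      (((Real.hasDerivAt_cos x).mul_const c).mul (hGc x)))
  simp only [h1]
  rw [h2.deriv]
  ring

private lemma lap_gen (F G : ℝ → ℝ) (hF : ∀ t, HasDerivAt F (G t) t)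
    (hG : ∀ t, HasDerivAt G (F t) t) (p : ℝ × ℝ) :
    laplacian (fun q : ℝ × ℝ => Real.cos q.1 * Real.cos q.2 * F (q.1 + q.2)) p
      = -2 * Real.sin p.1 * Real.cos p.2 * G (p.1 + p.2) +
        -2 * Real.sin p.2 * Real.cos p.1 * G (p.2 + p.1) := by
  have hswap : (fun y' : ℝ => Real.cos p.1 * Real.cos y' * F (p.1 + y'))
      = fun y' : ℝ => Real.cos y' * Real.cos p.1 * F (y' + p.1) := by
    funext y
    rw [add_comm p.1 y]; ring
  unfold laplacian
  rw [hswap]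
  rw [second_deriv_aux F G hF hG (Real.cos p.2) p.2 p.1,
    second_deriv_aux F G hF hG (Real.cos p.1) p.1 p.2]

private lemma frontier_cos_zero {z : ℝ × ℝ}
    (hz : z ∈ frontier ((Set.Ioo (-(π / 2)) (π / 2)) ×ˢ
      (Set.Ioo (-(π / 2)) (π / 2)))) :
    Real.cos z.1 * Real.cos z.2 = 0 := by
  have hlt : -(π / 2) < π / 2 := by linarith [pi_pos]
  rw [frontier_prod_eq, frontier_Ioo hlt] at hz
  rcases hz with ⟨_, h2⟩ | ⟨h1, _⟩
  · rcases h2 with h | h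
    · simp only [h]
      simp [Real.cos_neg, Real.cos_pi_div_two]
    · simp only [Set.mem_singleton_iff] at h
      simp [h, Real.cos_pi_div_two]
  · rcases h1 with h | h
    · simp only [h]
      simp [Real.cos_neg, Real.cos_pi_div_two]
    · simp only [Set.mem_singleton_iff] at h
      simp [h, Real.cos_pi_div_two]

/-- Theorem 4: There exist functions `u, v`, smooth on an open
neighbourhood of the closed square, vanishing on its boundary, with
`u·Δu = v·Δv` on the open square `D = (−π/2, π/2)²`, and neither `u = v` on
`D` nor `u = −v` on `D`. -/
theorem exists_distinct_solutions_of_quadratic_equation :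
    ∃ (u v : ℝ × ℝ → ℝ) (s : Set (ℝ × ℝ)),
      IsOpen s ∧
      closure ((Set.Ioo (-(π / 2)) (π / 2)) ×ˢ (Set.Ioo (-(π / 2)) (π / 2)))
        ⊆ s ∧
      ContDiffOn ℝ (⊤ : ℕ∞) u s ∧ ContDiffOn ℝ (⊤ : ℕ∞) v s ∧
      (∀ z ∈ frontier ((Set.Ioo (-(π / 2)) (π / 2)) ×ˢ
          (Set.Ioo (-(π / 2)) (π / 2))), u z = 0 ∧ v z = 0) ∧
      (∀ z ∈ (Set.Ioo (-(π / 2)) (π / 2)) ×ˢ (Set.Ioo (-(π / 2)) (π / 2)),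
          u z * laplacian u z = v z * laplacian v z) ∧
      ¬ (∀ z ∈ (Set.Ioo (-(π / 2)) (π / 2)) ×ˢ (Set.Ioo (-(π / 2)) (π / 2)),
          u z = v z) ∧
      ¬ (∀ z ∈ (Set.Ioo (-(π / 2)) (π / 2)) ×ˢ (Set.Ioo (-(π / 2)) (π / 2)),
          u z = -v z) := by
  refine ⟨fun q : ℝ × ℝ => Real.cos q.1 * Real.cos q.2 * Real.cosh (q.1 + q.2),
    fun q : ℝ × ℝ => Real.cos q.1 * Real.cos q.2 * Real.sinh (q.1 + q.2),
    Set.univ, isOpen_univ, Set.subset_univ _, ?_, ?_, ?_, ?_, ?_, ?_⟩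
  · refine ContDiff.contDiffOn ?_
    exact ((Real.contDiff_cos.comp contDiff_fst).mul
      (Real.contDiff_cos.comp contDiff_snd)).mul
      (Real.contDiff_cosh.comp (contDiff_fst.add contDiff_snd))
  · refine ContDiff.contDiffOn ?_
    exact ((Real.contDiff_cos.comp contDiff_fst).mul
      (Real.contDiff_cos.comp contDiff_snd)).mul
      (Real.contDiff_sinh.comp (contDiff_fst.add contDiff_snd))
  · intro z hz
    have h := frontier_cos_zero hz
    constructor <;> · simp only [h, zero_mul]
  · intro z _
    rw [lap_gen Real.cosh Real.sinh Real.hasDerivAt_cosh Real.hasDerivAt_sinh z,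
      lap_gen Real.sinh Real.cosh Real.hasDerivAt_sinh Real.hasDerivAt_cosh z,
      add_comm z.2 z.1]
    ring
  · intro h
    have h0 : ((0 : ℝ), (0 : ℝ)) ∈ (Set.Ioo (-(π / 2)) (π / 2)) ×ˢ
        (Set.Ioo (-(π / 2)) (π / 2)) := by
      constructor <;> constructor <;> simp [pi_pos]
    have := h _ h0
    simp [Real.cosh_zero, Real.sinh_zero] at this
  · intro h
    have h0 : ((0 : ℝ), (0 : ℝ)) ∈ (Set.Ioo (-(π / 2)) (π / 2)) ×ˢ
        (Set.Ioo (-(π / 2)) (π / 2)) := by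
      constructor <;> constructor <;> simp [pi_pos]
    have := h _ h0
    simp [Real.cosh_zero, Real.sinh_zero] at this
end
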